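/- Suppose f : ℝ₊³ → ℝ is symmetric and satisfies f(x,y,z) = f(x, y+z, 0) + f(0, y/(y+z), z/(y+z)) for all x, y, z > 0. Then there exists φ : ℝ₊₊ → ℝ such that f(x,y,z) = φ(x+y+z) for all x, y, z > 0. -/

import Mathlib

/-!
The second term `F y z = f(0, y/(y+z), z/(y+z))` of the equation (`splitTerm f y z`) is homogeneous
of degree `0`. Applying the equation at a point and at its image under `x ↔ z`, normalised to
`x + y + z = 1` where symmetry gives `f(x, y+z, 0) = F x (y+z)`, yields the exchange identity
`F a (b+c) + F b c = F c (a+b) + F b a`. Four instances of it, at points built from `x`, `1` and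
`1 + 2x`, force `F x 1 = F 1 1`, so `F` is constant. The equation then says that
`f(a, b+c, 0) = f(c, b+a, 0)`, which lets one move mass between the first two slots of `f(·, ·, 0)`
until both equal half the total.
-/

noncomputable def splitTerm (f : ℝ → ℝ → ℝ → ℝ) (p q : ℝ) : ℝ :=
  f 0 (p / (p + q)) (q / (p + q))

theorem splitTerm_mul_mul (f : ℝ → ℝ → ℝ → ℝ) {t : ℝ} (ht : t ≠ 0) (a b : ℝ) :
    splitTerm f (t * a) (t * b) = splitTerm f a b := by
  simp only [splitTerm, ← mul_add, mul_div_mul_left _ _ ht]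

theorem eq_one_one_of_exchange (F : ℝ → ℝ → ℝ)
    (hmul : ∀ t a b : ℝ, 0 < t → 0 < a → 0 < b → F (t * a) (t * b) = F a b)
    (hexch : ∀ a b c : ℝ, 0 < a → 0 < b → 0 < c →
      F a (b + c) + F b c = F c (a + b) + F b a)
    {a b : ℝ} (ha : 0 < a) (hb : 0 < b) : F a b = F 1 1 := by
  have hscale : ∀ t p q p' q' : ℝ, 0 < t → 0 < p → 0 < q → p' = t * p → q' = t * q →
      F p' q' = F p q := by
    rintro t p q _ _ ht hp hq rfl rfl
    exact hmul t p q ht hp hq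
  have hB : ∀ x y : ℝ, 0 < x → 0 < y →
      F y 1 + F x 1 = F 1 (x + y + x * y) + F x (y * (1 + x)) := by
    intro x y hx hy
    have h := hexch (y * (1 + x)) x 1 (by positivity) hx one_pos
    rw [show y * (1 + x) + x = x + y + x * y by ring] at h
    linarith [hscale (1 + x) y 1 (y * (1 + x)) (x + 1) (by positivity) hy one_pos
      (by ring) (by ring)]
  have hA : ∀ x y : ℝ, 0 < x → 0 < y →
      F x 1 + F x (y * (1 + x)) = F y (x * (1 + y)) + F 1 (x + y + x * y) := by
    intro x y hx hy
    set s := x + y + x * y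
    have hs : 0 < s := by positivity
    have h := hexch (s * x) x (y * (1 + x)) (by positivity) hx (by positivity)
    linarith [hscale s x 1 _ (x + y * (1 + x)) hs hx one_pos rfl (by ring),
      hscale (1 + x) y (x * (1 + y)) (y * (1 + x)) (s * x + x) (by positivity) hy
        (by positivity) (by ring) (by ring),
      hscale x 1 s x (s * x) hx one_pos hs (by ring) (by ring)]
  -- both `F x 1` and `F 1 1` equal `F 1 (1 + 2x)`
  have hG : ∀ x, 0 < x → F x 1 = F 1 1 := by
    intro x hx
    have hA₁ := hA x 1 hx one_pos
    have hA₂ := hA 1 x one_pos hx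
    have hB₁ := hB x 1 hx one_pos
    have hB₂ := hB 1 x one_pos hx
    rw [show 1 + x + 1 * x = x + 1 + x * 1 by ring] at hA₂ hB₂
    linarith
  rw [hscale b (a / b) 1 a b hb (by positivity) one_pos (by field_simp) (by ring),
    hG _ (by positivity)]

def IsSymmetricOnNonneg (f : ℝ → ℝ → ℝ → ℝ) : Prop :=
  ∀ x y z : ℝ, 0 ≤ x → 0 ≤ y → 0 ≤ z → ∀ σ : Equiv.Perm (Fin 3),
    f x y z = f (![x, y, z] (σ 0)) (![x, y, z] (σ 1)) (![x, y, z] (σ 2))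

namespace IsSymmetricOnNonneg

variable {f : ℝ → ℝ → ℝ → ℝ} (hsym : IsSymmetricOnNonneg f)

include hsym

theorem swap_zero_two {x y z : ℝ} (hx : 0 ≤ x) (hy : 0 ≤ y) (hz : 0 ≤ z) :
    f x y z = f z y x := by
  simpa [Equiv.swap_apply_def] using hsym x y z hx hy hz (Equiv.swap 0 2)

theorem rotate {x y z : ℝ} (hx : 0 ≤ x) (hy : 0 ≤ y) (hz : 0 ≤ z) :
    f x y z = f y z x := by
  simpa using hsym x y z hx hy hz (finRotate 3)

end IsSymmetricOnNonneg

section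

variable {f : ℝ → ℝ → ℝ → ℝ} (hsym : IsSymmetricOnNonneg f)
  (heq : ∀ x y z : ℝ, 0 < x → 0 < y → 0 < z → f x y z = f x (y + z) 0 + splitTerm f y z)

include hsym heq

theorem apply_div_eq_splitTerm_add {a b c : ℝ} (ha : 0 < a) (hb : 0 < b) (hc : 0 < c) :
    f (a / (a + b + c)) (b / (a + b + c)) (c / (a + b + c)) =
      splitTerm f a (b + c) + splitTerm f b c := by
  have hs : (a + b + c)⁻¹ ≠ 0 := by positivity
  rw [heq _ _ _ (by positivity) (by positivity) (by positivity), ← add_div,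
    ← hsym.rotate le_rfl (by positivity) (by positivity)]
  congr 1
  · rw [splitTerm, add_assoc]
  · simp only [div_eq_inv_mul, splitTerm_mul_mul f hs]

theorem splitTerm_exchange {a b c : ℝ} (ha : 0 < a) (hb : 0 < b) (hc : 0 < c) :
    splitTerm f a (b + c) + splitTerm f b c = splitTerm f c (a + b) + splitTerm f b a := by
  have h := apply_div_eq_splitTerm_add hsym heq hc hb ha
  rw [show c + b + a = a + b + c by ring, add_comm b a] at h
  rw [← h, ← apply_div_eq_splitTerm_add hsym heq ha hb hc,
    hsym.swap_zero_two (by positivity) (by positivity) (by positivity)]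

theorem splitTerm_eq_one_one {a b : ℝ} (ha : 0 < a) (hb : 0 < b) :
    splitTerm f a b = splitTerm f 1 1 :=
  eq_one_one_of_exchange (splitTerm f) (fun _ a b ht _ _ ↦ splitTerm_mul_mul f ht.ne' a b)
    (fun _ _ _ ha hb hc ↦ splitTerm_exchange hsym heq ha hb hc) ha hb

theorem apply_add_zero_comm {a b c : ℝ} (ha : 0 < a) (hb : 0 < b) (hc : 0 < c) :
    f a (b + c) 0 = f c (b + a) 0 := by
  have h := hsym.swap_zero_two ha.le hb.le hc.le
  rwa [heq a b c ha hb hc, heq c b a hc hb ha, splitTerm_eq_one_one hsym heq hb hc,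
    splitTerm_eq_one_one hsym heq hb ha, add_left_inj] at h

theorem apply_zero_eq_half {a b : ℝ} (ha : 0 < a) (hb : 0 < b) :
    f a b 0 = f ((a + b) / 2) ((a + b) / 2) 0 :=
  calc f a b 0 = f a (b / 2 + b / 2) 0 := by rw [add_halves]
    _ = f (b / 2) (b / 2 + a) 0 := apply_add_zero_comm hsym heq ha (by positivity) (by positivity)
    _ = f (b / 2) (a / 2 + (a + b) / 2) 0 := by ring_nf
    _ = f ((a + b) / 2) (a / 2 + b / 2) 0 :=
      apply_add_zero_comm hsym heq (by positivity) (by positivity) (by positivity)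
    _ = f ((a + b) / 2) ((a + b) / 2) 0 := by rw [add_div]

end

/-- Solutions of the modified entropy equation, case α = 0. -/
theorem stmt_12 (f : ℝ → ℝ → ℝ → ℝ)
    (hsym : ∀ x y z : ℝ, 0 ≤ x → 0 ≤ y → 0 ≤ z → ∀ σ : Equiv.Perm (Fin 3),
      f x y z = f (![x, y, z] (σ 0)) (![x, y, z] (σ 1)) (![x, y, z] (σ 2)))
    (heq : ∀ x y z : ℝ, 0 < x → 0 < y → 0 < z →
      f x y z = f x (y + z) 0 + f 0 (y / (y + z)) (z / (y + z))) :
    ∃ φ : ℝ → ℝ, ∀ x y z : ℝ, 0 < x → 0 < y → 0 < z →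
      f x y z = φ (x + y + z) := by
  have heq' : ∀ x y z : ℝ, 0 < x → 0 < y → 0 < z →
      f x y z = f x (y + z) 0 + splitTerm f y z := heq
  refine ⟨fun s ↦ f (s / 2) (s / 2) 0 + splitTerm f 1 1, fun x y z hx hy hz ↦ ?_⟩
  rw [heq' x y z hx hy hz, splitTerm_eq_one_one hsym heq' hy hz,
    apply_zero_eq_half hsym heq' hx (by positivity), add_assoc]
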